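/- For all (Ω,β₁,β₂) ∈ ℝ³ one has L₁(Ω,β₁,β₂) ≤ (3/50)·(9+√6), and equality holds at the point (π, arccos((1−√6)/5), (1/2)·arccos(1/(1+√6))). In particular the global maximum of L₁ equals (3/50)·(9+√6) ≈ 0.687. -/
import Mathlib


/-- The kinematic landscape function `L₁(Ω,β₁,β₂)`. -/
noncomputable def L1 (Ω β₁ β₂ : ℝ) : ℝ :=
  (1/8) * Real.sin β₂ ^ 2 * (3 + Real.cos (2*β₁))
  + (1/2) * Real.sin β₁ ^ 2 * Real.cos β₂ ^ 2
  - (1/2) * Real.cos Ω * Real.sin β₁ * Real.sin (β₁/2) ^ 2 * Real.sin (2*β₂)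

lemma aux_le {t R : ℝ} (h : t^2 ≤ R^2) (h0 : 0 ≤ R) : t ≤ R := by
  nlinarith

set_option maxHeartbeats 1000000 in
/-- Key algebraic inequality behind the bound on `L₁`. -/
lemma key_ineq (x s u v w r : ℝ) (hxs : x^2 + s^2 = 1) (huv : u^2 + v^2 = 1)
    (hw : w^2 ≤ 1) (hr : r^2 = 6) (hr0 : 0 ≤ r) :
    1/8 * u^2 * (3 + (2*x^2 - 1)) + 1/2 * s^2 * v^2
      - 1/2 * w * s * ((1-x)/2) * (2*(u*v)) ≤ 3/50 * (9 + r) := by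
  have hr2 : 2 ≤ r := by nlinarith
  have hr3 : r ≤ 5/2 := by nlinarith
  have hxle : x ≤ 1 := by nlinarith [sq_nonneg (x-1), sq_nonneg s]
  have hxge : -1 ≤ x := by nlinarith [sq_nonneg (x+1), sq_nonneg s]
  -- the quartic certificate
  have hq : ((1-3*x^2)/8)^2 + s^2*(1-x)^2/16 ≤ ((x^2+(33+12*r)/25)/8)^2 := by
    have hid : ((x^2+(33+12*r)/25)/8)^2 - (((1-3*x^2)/8)^2 + s^2*(1-x)^2/16)
        = (1/64)*((96/25+44/25*r)*(1-x)*(x-(1-r)/5)^2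
          + (84/25*(r-2)+24/25)*(1+x)*(x-(1-r)/5)^2
          + 4*((1-x)*(1+x))*(x-(1-r)/5)^2) := by
      linear_combination (87/10000 - 2/625*r - 3/125*x - 1/1000*(x*r) - 3/400*x^2) * hr
        + (-(1-x)^2/16) * hxs
    have t1 : 0 ≤ (96/25+44/25*r)*(1-x)*(x-(1-r)/5)^2 :=
      mul_nonneg (mul_nonneg (by linarith) (by linarith)) (sq_nonneg _)
    have t2 : 0 ≤ (84/25*(r-2)+24/25)*(1+x)*(x-(1-r)/5)^2 :=
      mul_nonneg (mul_nonneg (by linarith) (by linarith)) (sq_nonneg _)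
    have t3 : 0 ≤ 4*((1-x)*(1+x))*(x-(1-r)/5)^2 :=
      mul_nonneg (mul_nonneg (by norm_num) (mul_nonneg (by linarith) (by linarith)))
        (sq_nonneg _)
    linarith
  have hb2 : (-(w*s*(1-x))/4)^2 ≤ s^2*(1-x)^2/16 := by
    nlinarith [mul_nonneg (mul_nonneg (by linarith : (0:ℝ) ≤ 1 - w^2) (sq_nonneg s))
      (sq_nonneg (1-x))]
  have hCS : (v^2-u^2)^2 + (2*(u*v))^2 = 1 := by
    linear_combination (u^2 + v^2 + 1) * huv
  have hR0 : (0:ℝ) ≤ (x^2+(33+12*r)/25)/8 := by nlinarith [sq_nonneg x]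
  have ht2 : ((1-3*x^2)/8*(v^2-u^2) + (-(w*s*(1-x))/4)*(2*(u*v)))^2
      + ((1-3*x^2)/8*(2*(u*v)) - (-(w*s*(1-x))/4)*(v^2-u^2))^2
      = ((1-3*x^2)/8)^2 + (-(w*s*(1-x))/4)^2 := by
    linear_combination (((1-3*x^2)/8)^2 + (-(w*s*(1-x))/4)^2) * hCS
  have ht2le : ((1-3*x^2)/8*(v^2-u^2) + (-(w*s*(1-x))/4)*(2*(u*v)))^2
      ≤ ((x^2+(33+12*r)/25)/8)^2 := by
    linarith [ht2, sq_nonneg ((1-3*x^2)/8*(2*(u*v)) - (-(w*s*(1-x))/4)*(v^2-u^2)),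
      hb2, hq]
  have hcross : (1-3*x^2)/8*(v^2-u^2) + (-(w*s*(1-x))/4)*(2*(u*v))
      ≤ (x^2+(33+12*r)/25)/8 := aux_le ht2le hR0
  have hsplit : 1/8 * u^2 * (3 + (2*x^2 - 1)) + 1/2 * s^2 * v^2
      - 1/2 * w * s * ((1-x)/2) * (2*(u*v))
      = (3-x^2)/8 + ((1-3*x^2)/8*(v^2-u^2) + (-(w*s*(1-x))/4)*(2*(u*v))) := by
    linear_combination (3/8 - x^2/8) * huv + (v^2/2) * hxs
  have hfin : (3-x^2)/8 + (x^2+(33+12*r)/25)/8 = 3/50 * (9 + r) := by ring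
  linarith

open Real in
/-- `L₁ ≤ (3/50)·(9+√6)` everywhere, with equality at the point
`(π, arccos((1−√6)/5), (1/2)·arccos(1/(1+√6)))`: the global maximum of `L₁`
equals `(3/50)·(9+√6) ≈ 0.687`. -/
theorem stmt10 :
    (∀ Ω β₁ β₂ : ℝ, L1 Ω β₁ β₂ ≤ (3/50) * (9 + Real.sqrt 6))
    ∧ L1 π (arccos ((1 - Real.sqrt 6)/5)) ((1/2) * arccos (1/(1 + Real.sqrt 6)))
        = (3/50) * (9 + Real.sqrt 6) := by
  have hr : Real.sqrt 6 ^ 2 = 6 := Real.sq_sqrt (by norm_num)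
  have hr0 : (0:ℝ) ≤ Real.sqrt 6 := Real.sqrt_nonneg 6
  constructor
  · intro Ω β₁ β₂
    have hxs : Real.cos β₁ ^ 2 + Real.sin β₁ ^ 2 = 1 := by
      rw [add_comm]; exact Real.sin_sq_add_cos_sq β₁
    have huv : Real.sin β₂ ^ 2 + Real.cos β₂ ^ 2 = 1 := Real.sin_sq_add_cos_sq β₂
    have hw : Real.cos Ω ^ 2 ≤ 1 := Real.cos_sq_le_one Ω
    have h1 : Real.cos (2*β₁) = 2 * Real.cos β₁ ^ 2 - 1 := Real.cos_two_mul β₁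
    have h2 : Real.sin (2*β₂) = 2 * (Real.sin β₂ * Real.cos β₂) := by
      rw [Real.sin_two_mul]; ring
    have h3 : Real.sin (β₁/2) ^ 2 = (1 - Real.cos β₁)/2 := by
      have h := Real.sin_sq_eq_half_sub (β₁/2)
      rw [show 2*(β₁/2) = β₁ by ring] at h
      rw [h]; ring
    have := key_ineq (Real.cos β₁) (Real.sin β₁) (Real.sin β₂) (Real.cos β₂)
      (Real.cos Ω) (Real.sqrt 6) hxs huv hw hr hr0
    rw [L1, h1, h2, h3]
    linarith
  · have hr2 : 2 ≤ Real.sqrt 6 := by nlinarith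
    have hr3 : Real.sqrt 6 ≤ 5/2 := by nlinarith
    set r := Real.sqrt 6 with hrdef
    have hc1 : -1 ≤ (1-r)/5 := by linarith
    have hc2 : (1-r)/5 ≤ 1 := by linarith
    have h1r : (1:ℝ) + r ≠ 0 := by positivity
    have harg : 1/(1+r) = -((1-r)/5) := by
      rw [div_eq_iff h1r]; linear_combination (-1/5) * hr
    rw [harg, L1]
    have e1 : Real.cos π = -1 := Real.cos_pi
    have e2 : Real.cos (Real.arccos ((1-r)/5)) = (1-r)/5 := Real.cos_arccos hc1 hc2
    have e3 : Real.sin (Real.arccos ((1-r)/5)) = Real.sqrt (1 - ((1-r)/5)^2) :=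
      Real.sin_arccos _
    have e4 : Real.cos (2*(1/2 * Real.arccos (-((1-r)/5)))) = -((1-r)/5) := by
      rw [show 2*(1/2 * Real.arccos (-((1-r)/5))) = Real.arccos (-((1-r)/5)) by ring]
      exact Real.cos_arccos (by linarith) (by linarith)
    have e5 : Real.sin (1/2 * Real.arccos (-((1-r)/5))) ^ 2 = (1 - (-((1-r)/5)))/2 := by
      have h := Real.sin_sq_eq_half_sub (1/2 * Real.arccos (-((1-r)/5)))
      rw [e4] at h; rw [h]; ring
    have e6 : Real.cos (1/2 * Real.arccos (-((1-r)/5))) ^ 2 = (1 + (-((1-r)/5)))/2 := by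
      have h := Real.cos_sq (1/2 * Real.arccos (-((1-r)/5)))
      rw [e4] at h; rw [h]; ring
    have e7 : Real.sin (2*(1/2 * Real.arccos (-((1-r)/5)))) = Real.sqrt (1 - ((1-r)/5)^2) := by
      rw [show 2*(1/2 * Real.arccos (-((1-r)/5))) = Real.arccos (-((1-r)/5)) by ring,
        Real.sin_arccos, neg_sq]
    have e8 : Real.cos (2*Real.arccos ((1-r)/5)) = 2*((1-r)/5)^2 - 1 := by
      rw [Real.cos_two_mul, e2]
    have e9 : Real.sqrt (1 - ((1-r)/5)^2) * Real.sqrt (1 - ((1-r)/5)^2)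
        = 1 - ((1-r)/5)^2 := Real.mul_self_sqrt (by nlinarith)
    have e10 : Real.sin (Real.arccos ((1-r)/5) / 2) ^ 2 = (1 - (1-r)/5)/2 := by
      have h := Real.sin_sq_eq_half_sub (Real.arccos ((1-r)/5) / 2)
      rw [show 2*(Real.arccos ((1-r)/5)/2) = Real.arccos ((1-r)/5) by ring, e2] at h
      rw [h]; ring
    rw [e1, e3, e5, e6, e7, e8, e10]
    have e11 : Real.sqrt (1 - ((1-r)/5)^2) ^ 2 = 1 - ((1-r)/5)^2 :=
      Real.sq_sqrt (by nlinarith)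
    linear_combination ((1-(1-r)/5)/4) * e9 + ((1-(1-r)/5)/4) * e11 + (-r/200) * hr
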